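/- arXiv:2304.03564 — 2 statements merged into one kernel-verified Lean document; each statement's English description precedes it below -/
import Mathlib

section
/- Let R be a ring with identity and a nontrivial idempotent e, let g : R → R satisfy Assumption B, and let d : R → R be a multiplicative skew semi-derivation with associated map g and automorphism α. Then for all a₁₁ ∈ R₁₁, a₁₂ ∈ R₁₂, a₂₁ ∈ R₂₁, a₂₂ ∈ R₂₂: d(a₁₁ + a₁₂ + a₂₁ + a₂₂) = d(a₁₁) + d(a₁₂) + d(a₂₁) + d(a₂₂). -/
/-- `pel e 0 = e₁ = e`, `pel e 1 = e₂ = 1 - e`. -/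
def pel {R : Type*} [Ring R] (e : R) : Fin 2 → R := fun i => if i = 0 then e else 1 - e

/-- The Peirce component `R_ij = e_i R e_j`. -/
def peirceSet {R : Type*} [Ring R] (e : R) (i j : Fin 2) : Set R :=
  {x | ∃ r : R, x = pel e i * r * pel e j}

/-- A multiplicative skew semi-derivation `d` with associated map `g` and automorphism `α`. -/
def IsMultSkewSemiDeriv {R : Type*} [Ring R] (d g : R → R) (α : R ≃+* R) : Prop :=
  (∀ x y : R, d (x * y) = d x * g y + α x * d y) ∧
  (∀ x y : R, d (x * y) = d x * α y + g x * d y) ∧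
  (∀ x : R, d (g x) = g (d x))

/-- A multiplicative generalized skew semi-derivation `f` with associated map `g`,
multiplicative skew semi-derivation `d` and automorphism `α`. -/
def IsMultGenSkewSemiDeriv {R : Type*} [Ring R] (f d g : R → R) (α : R ≃+* R) : Prop :=
  (∀ x y : R, f (x * y) = f x * g y + α x * d y) ∧
  (∀ x y : R, f (x * y) = d x * α y + g x * f y) ∧
  (∀ x : R, f (g x) = g (f x))

/-- Assumption A on the map `g`. -/
def AssumptionA {R : Type*} [Ring R] (e : R) (g : R → R) : Prop :=
  g 0 = 0 ∧
  (∀ i j k : Fin 2, i ≤ j →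
    ∀ a ∈ peirceSet e k 0, ∀ b ∈ peirceSet e k 1,
      (∀ x ∈ peirceSet e i j, (a + b) * g x = 0) →
      (i = 0 → a = 0) ∧ (i = 1 → b = 0)) ∧
  (∀ i j : Fin 2,
    ∀ a ∈ peirceSet e 0 j, ∀ b ∈ peirceSet e 1 j,
      (∀ x ∈ peirceSet e i i, g x * (a + b) = 0) →
      (i = 0 → a = 0) ∧ (i = 1 → b = 0)) ∧
  (∀ a ∈ peirceSet e 0 0, ∀ b ∈ peirceSet e 0 1, g (a + b) = g a + g b) ∧
  (∀ a ∈ peirceSet e 0 0, ∀ b ∈ peirceSet e 1 0, g (a + b) = g a + g b)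

/-- Assumption B on the map `g`. -/
def AssumptionB {R : Type*} [Ring R] (e : R) (g : R → R) : Prop :=
  g 0 = 0 ∧
  (∀ i j : Fin 2,
    ∀ a ∈ peirceSet e j 0, ∀ b ∈ peirceSet e j 1,
      (∀ x ∈ peirceSet e i i, (a + b) * g x = 0) → a + b = 0) ∧
  (∀ i : Fin 2,
    ∀ a ∈ peirceSet e 0 0, ∀ c ∈ peirceSet e 1 0,
      (∀ x ∈ peirceSet e i i, g x * (a + c) = 0) → a + c = 0)

lemma pel_sum {R : Type*} [Ring R] (e : R) : pel e 0 + pel e 1 = 1 := by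
  simp [pel]

/-- If `T * g x = 0` for all `x ∈ R_ii`, then `T = 0`, by Assumption B (i). -/
lemma aux_vanish {R : Type*} [Ring R] (e : R) (g : R → R) (hg : AssumptionB e g)
    (i : Fin 2) (T : R) (hT : ∀ x ∈ peirceSet e i i, T * g x = 0) : T = 0 := by
  have hj : ∀ j : Fin 2, pel e j * T = 0 := by
    intro j
    have hcomb : pel e j * T * pel e 0 + pel e j * T * pel e 1 = pel e j * T := by
      rw [← mul_add, pel_sum, mul_one]
    have h := hg.2.1 i j (pel e j * T * pel e 0) ⟨T, rfl⟩
      (pel e j * T * pel e 1) ⟨T, rfl⟩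
      (by
        intro x hx
        rw [hcomb, mul_assoc, hT x hx, mul_zero])
    rw [hcomb] at h
    exact h
  calc T = (pel e 0 + pel e 1) * T := by rw [pel_sum, one_mul]
    _ = pel e 0 * T + pel e 1 * T := by rw [add_mul]
    _ = 0 := by rw [hj 0, hj 1, add_zero]

lemma aux_d_zero {R : Type*} [Ring R] (g : R → R) (hg0 : g 0 = 0) (α : R ≃+* R)
    (d : R → R) (hd : IsMultSkewSemiDeriv d g α) : d 0 = 0 := by
  have h := hd.1 0 0
  simpa [hg0] using h

/-- Key lemma: if `a` annihilates `R_ii` on the right, then `d` splits `a + b` for any `b`. -/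
lemma aux_key {R : Type*} [Ring R] (e : R) (g : R → R) (hg : AssumptionB e g)
    (α : R ≃+* R) (d : R → R) (hd : IsMultSkewSemiDeriv d g α)
    (i : Fin 2) (a : R) (ha : ∀ x ∈ peirceSet e i i, a * x = 0) (b : R) :
    d (a + b) = d a + d b := by
  have hd0 : d 0 = 0 := aux_d_zero g hg.1 α d hd
  have hT : ∀ x ∈ peirceSet e i i, (d (a + b) - d a - d b) * g x = 0 := by
    intro x hx
    have hax : a * x = 0 := ha x hx
    have h2 : (0 : R) = d a * g x + α a * d x := by
      have h := hd.1 a x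
      rw [hax, hd0] at h
      exact h
    have h1 : d b * g x + α b * d x
        = d (a + b) * g x + (α a + α b) * d x := by
      have h1' := hd.1 (a + b) x
      have h3 := hd.1 b x
      have hab : (a + b) * x = b * x := by rw [add_mul, hax, zero_add]
      rw [hab, h3, map_add] at h1'
      exact h1'
    linear_combination (norm := noncomm_ring) -h1 + h2
  have h0 := aux_vanish e g hg i (d (a + b) - d a - d b) hT
  have : d (a + b) - (d a + d b) = 0 := by rwa [← sub_sub]
  exact sub_eq_zero.mp this

/-- Components of column `j'` annihilate `R_ii` when `pel e j' * pel e i = 0`. -/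
lemma aux_ann {R : Type*} [Ring R] (e : R) {i j j' : Fin 2}
    (h : pel e j' * pel e i = 0) :
    ∀ a ∈ peirceSet e j j', ∀ x ∈ peirceSet e i i, a * x = 0 := by
  rintro a ⟨r, rfl⟩ x ⟨s, rfl⟩
  have h2 : pel e j' * (pel e i * (s * pel e i)) = 0 := by
    rw [← mul_assoc, h, zero_mul]
  simp only [mul_assoc, h2, mul_zero]

theorem stmt_12 {R : Type*} [Ring R] (e : R) (he : e * e = e) (he0 : e ≠ 0) (he1 : e ≠ 1)
    (g : R → R) (hg : AssumptionB e g) (α : R ≃+* R) (d : R → R)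
    (hd : IsMultSkewSemiDeriv d g α) :
    ∀ a11 ∈ peirceSet e 0 0, ∀ a12 ∈ peirceSet e 0 1, ∀ a21 ∈ peirceSet e 1 0,
      ∀ a22 ∈ peirceSet e 1 1,
        d (a11 + a12 + a21 + a22) = d a11 + d a12 + d a21 + d a22 := by
  intro a11 h11 a12 h12 a21 h21 a22 h22
  have h01 : pel e 0 * pel e 1 = 0 := by
    show e * (1 - e) = 0
    rw [mul_sub, mul_one, he, sub_self]
  have h10 : pel e 1 * pel e 0 = 0 := by
    show (1 - e) * e = 0
    rw [sub_mul, one_mul, he, sub_self]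
  -- annihilation facts
  have ha11 : ∀ x ∈ peirceSet e 1 1, a11 * x = 0 := aux_ann e h01 a11 h11
  have ha21 : ∀ x ∈ peirceSet e 1 1, a21 * x = 0 := aux_ann e h01 a21 h21
  have ha12 : ∀ x ∈ peirceSet e 0 0, a12 * x = 0 := aux_ann e h10 a12 h12
  have hc1 : ∀ x ∈ peirceSet e 1 1, (a11 + a21) * x = 0 := by
    intro x hx; rw [add_mul, ha11 x hx, ha21 x hx, add_zero]
  have key1 : d ((a11 + a21) + (a12 + a22)) = d (a11 + a21) + d (a12 + a22) :=
    aux_key e g hg α d hd 1 (a11 + a21) hc1 (a12 + a22)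
  have key2 : d (a11 + a21) = d a11 + d a21 :=
    aux_key e g hg α d hd 1 a11 ha11 a21
  have key3 : d (a12 + a22) = d a12 + d a22 :=
    aux_key e g hg α d hd 0 a12 ha12 a22
  have harr : a11 + a12 + a21 + a22 = (a11 + a21) + (a12 + a22) := by abel
  rw [harr, key1, key2, key3]
  abel
end

section
/- Let R be a ring with identity and a nontrivial idempotent e, let g : R → R satisfy Assumption A, and let f : R → R be a multiplicative generalized skew semi-derivation with associated map g, multiplicative skew semi-derivation d, and automorphism α. Then for all a₁₂, b₁₂ ∈ R₁₂, c₂₂, b₂₂ ∈ R₂₂, a₂₁ ∈ R₂₁, c₂₁ ∈ R₂₁: (i) f(a₁₂ + b₁₂·c₂₂) = f(a₁₂) + f(b₁₂·c₂₂); (ii) f(a₂₁ + b₂₂·c₂₁) = f(a₂₁) + f(b₂₂·c₂₁). -/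
section helpers
variable {R : Type*} [Ring R]

lemma pel_zero (e : R) : pel e 0 = e := rfl
lemma pel_one (e : R) : pel e 1 = 1 - e := rfl

lemma pel_idem (e : R) (he : e * e = e) (i : Fin 2) : pel e i * pel e i = pel e i := by
  fin_cases i
  · simpa [pel] using he
  · show (1-e)*(1-e) = 1-e
    rw [sub_mul, one_mul, mul_sub, mul_one, he, sub_self, sub_zero]

lemma pel_orth (e : R) (he : e * e = e) {i j : Fin 2} (h : i ≠ j) :
    pel e i * pel e j = 0 := by
  fin_cases i <;> fin_cases j <;> simp_all
  · show e * (1-e) = 0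
    rw [mul_sub, mul_one, he, sub_self]
  · show (1-e) * e = 0
    rw [sub_mul, one_mul, he, sub_self]

lemma pel_mem (e : R) (he : e * e = e) (i : Fin 2) : pel e i ∈ peirceSet e i i :=
  ⟨1, by rw [mul_one, pel_idem e he]⟩

lemma peirce_mul_zero (e : R) (he : e * e = e) {i j k l : Fin 2} (h : j ≠ k) {a b : R}
    (ha : a ∈ peirceSet e i j) (hb : b ∈ peirceSet e k l) : a * b = 0 := by
  obtain ⟨r, rfl⟩ := ha
  obtain ⟨s, rfl⟩ := hb
  calc pel e i * r * pel e j * (pel e k * s * pel e l)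
      = pel e i * r * (pel e j * pel e k) * (s * pel e l) := by noncomm_ring
    _ = 0 := by rw [pel_orth e he h]; simp

lemma pelL (e : R) (he : e * e = e) {i j : Fin 2} {a : R} (ha : a ∈ peirceSet e i j) :
    pel e i * a = a := by
  obtain ⟨r, rfl⟩ := ha
  calc pel e i * (pel e i * r * pel e j) = pel e i * pel e i * r * pel e j := by noncomm_ring
    _ = pel e i * r * pel e j := by rw [pel_idem e he]

lemma pelL0 (e : R) (he : e * e = e) {i j k : Fin 2} (h : i ≠ k) {a : R}
    (ha : a ∈ peirceSet e k j) : pel e i * a = 0 := by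
  obtain ⟨r, rfl⟩ := ha
  calc pel e i * (pel e k * r * pel e j) = pel e i * pel e k * (r * pel e j) := by noncomm_ring
    _ = 0 := by rw [pel_orth e he h]; simp

lemma pelR (e : R) (he : e * e = e) {i j : Fin 2} {a : R} (ha : a ∈ peirceSet e i j) :
    a * pel e j = a := by
  obtain ⟨r, rfl⟩ := ha
  calc pel e i * r * pel e j * pel e j = pel e i * r * (pel e j * pel e j) := by noncomm_ring
    _ = pel e i * r * pel e j := by rw [pel_idem e he]

lemma pelR0 (e : R) (he : e * e = e) {i j k : Fin 2} (h : k ≠ j) {a : R}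
    (ha : a ∈ peirceSet e i k) : a * pel e j = 0 := by
  obtain ⟨r, rfl⟩ := ha
  calc pel e i * r * pel e k * pel e j = pel e i * r * (pel e k * pel e j) := by noncomm_ring
    _ = 0 := by rw [pel_orth e he h]; simp

/-- Left cancellation from Assumption A (ii). -/
lemma cancel_left (e : R) {g : R → R} (hg : AssumptionA e g) (T : R)
    (h : ∀ i : Fin 2, ∀ x ∈ peirceSet e i i, g x * T = 0) : T = 0 := by
  have key : ∀ j : Fin 2, T * pel e j = 0 := by
    intro j
    have ha : e * T * pel e j ∈ peirceSet e 0 j := ⟨T, by rw [pel_zero]⟩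
    have hb : (1 - e) * T * pel e j ∈ peirceSet e 1 j := ⟨T, by rw [pel_one]⟩
    have hsum : ∀ i : Fin 2, ∀ x ∈ peirceSet e i i,
        g x * (e * T * pel e j + (1 - e) * T * pel e j) = 0 := by
      intro i x hx
      have hTs : e * T * pel e j + (1 - e) * T * pel e j = T * pel e j := by noncomm_ring
      rw [hTs, ← mul_assoc, h i x hx, zero_mul]
    have h0 := (hg.2.2.1 0 j _ ha _ hb (hsum 0)).1 rfl
    have h1 := (hg.2.2.1 1 j _ ha _ hb (hsum 1)).2 rfl
    calc T * pel e j = e * T * pel e j + (1 - e) * T * pel e j := by noncomm_ring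
      _ = 0 := by rw [h0, h1, add_zero]
  calc T = T * pel e 0 + T * pel e 1 := by rw [pel_zero, pel_one]; noncomm_ring
    _ = 0 := by rw [key 0, key 1, add_zero]

/-- Right cancellation from Assumption A (i). -/
lemma cancel_right (e : R) {g : R → R} (hg : AssumptionA e g) (T : R)
    (h : ∀ i : Fin 2, ∀ x ∈ peirceSet e i i, T * g x = 0) : T = 0 := by
  have key : ∀ k : Fin 2, pel e k * T = 0 := by
    intro k
    have ha : pel e k * T * e ∈ peirceSet e k 0 := ⟨T, by rw [pel_zero]⟩
    have hb : pel e k * T * (1 - e) ∈ peirceSet e k 1 := ⟨T, by rw [pel_one]⟩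
    have hsum : ∀ i : Fin 2, ∀ x ∈ peirceSet e i i,
        (pel e k * T * e + pel e k * T * (1 - e)) * g x = 0 := by
      intro i x hx
      have hTs : pel e k * T * e + pel e k * T * (1 - e) = pel e k * T := by noncomm_ring
      rw [hTs, mul_assoc, h i x hx, mul_zero]
    have h0 := (hg.2.1 0 0 k le_rfl _ ha _ hb (hsum 0)).1 rfl
    have h1 := (hg.2.1 1 1 k le_rfl _ ha _ hb (hsum 1)).2 rfl
    calc pel e k * T = pel e k * T * e + pel e k * T * (1 - e) := by noncomm_ring
      _ = 0 := by rw [h0, h1, add_zero]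
  calc T = pel e 0 * T + pel e 1 * T := by rw [pel_zero, pel_one]; noncomm_ring
    _ = 0 := by rw [key 0, key 1, add_zero]

variable {g f d : R → R} {α : R ≃+* R}

lemma keyL (f0 : f 0 = 0) (f2 : ∀ x y : R, f (x * y) = d x * α y + g x * f y)
    (u v x : R) (hxv : x * v = 0) : g x * (f (u + v) - f u - f v) = 0 := by
  have h1 := f2 x (u + v)
  rw [mul_add, hxv, add_zero, map_add, mul_add] at h1
  -- h1 : f (x*u) = d x * α u + d x * α v + g x * f (u+v)
  have h2 := f2 x u
  have h3 := f2 x v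
  rw [hxv, f0] at h3
  have e1 : g x * f (u + v) = f (x * u) - (d x * α u + d x * α v) := by
    rw [h1]; abel
  have e2 : g x * f u = f (x * u) - d x * α u := by rw [h2]; abel
  have e3 : g x * f v = 0 - d x * α v := eq_sub_of_add_eq' h3.symm
  rw [mul_sub, mul_sub, e1, e2, e3]
  abel

lemma keyR (f0 : f 0 = 0) (f1 : ∀ x y : R, f (x * y) = f x * g y + α x * d y)
    (u v x : R) (hvx : v * x = 0) : (f (u + v) - f u - f v) * g x = 0 := by
  have h1 := f1 (u + v) x
  rw [add_mul, hvx, add_zero, map_add, add_mul] at h1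
  -- h1 : f (u*x) = f (u+v) * g x + (α u * d x + α v * d x)
  have h2 := f1 u x
  have h3 := f1 v x
  rw [hvx, f0] at h3
  have e1 : f (u + v) * g x = f (u * x) - (α u * d x + α v * d x) := by
    rw [h1]; abel
  have e2 : f u * g x = f (u * x) - α u * d x := by rw [h2]; abel
  have e3 : f v * g x = 0 - α v * d x := eq_sub_of_add_eq h3.symm
  rw [sub_mul, sub_mul, e1, e2, e3]
  abel

lemma add_of_left (e : R) (hg : AssumptionA e g) (f0 : f 0 = 0)
    (f2 : ∀ x y : R, f (x * y) = d x * α y + g x * f y) (u v : R)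
    (h0 : ∀ x ∈ peirceSet e 0 0, x * v = 0)
    (h1 : ∀ x ∈ peirceSet e 1 1, x * u = 0) : f (u + v) = f u + f v := by
  have hT : f (u + v) - f u - f v = 0 := by
    apply cancel_left e hg
    intro i x hx
    fin_cases i
    · exact keyL f0 f2 u v x (h0 x hx)
    · have hk := keyL f0 f2 v u x (h1 x hx)
      rw [add_comm v u] at hk
      calc g x * (f (u + v) - f u - f v) = g x * (f (u + v) - f v - f u) := by
            rw [sub_sub, sub_sub, add_comm (f u)]
        _ = 0 := hk
  rw [sub_sub] at hT
  exact sub_eq_zero.mp hT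

lemma add_of_right (e : R) (hg : AssumptionA e g) (f0 : f 0 = 0)
    (f1 : ∀ x y : R, f (x * y) = f x * g y + α x * d y) (u v : R)
    (h0 : ∀ x ∈ peirceSet e 0 0, v * x = 0)
    (h1 : ∀ x ∈ peirceSet e 1 1, u * x = 0) : f (u + v) = f u + f v := by
  have hT : f (u + v) - f u - f v = 0 := by
    apply cancel_right e hg
    intro i x hx
    fin_cases i
    · exact keyR f0 f1 u v x (h0 x hx)
    · have hk := keyR f0 f1 v u x (h1 x hx)
      rw [add_comm v u] at hk
      calc (f (u + v) - f u - f v) * g x = (f (u + v) - f v - f u) * g x := by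
            rw [sub_sub, sub_sub, add_comm (f u)]
        _ = 0 := hk
  rw [sub_sub] at hT
  exact sub_eq_zero.mp hT

end helpers

theorem stmt_15 {R : Type*} [Ring R] (e : R) (he : e * e = e) (he0 : e ≠ 0) (he1 : e ≠ 1)
    (g : R → R) (hg : AssumptionA e g) (α : R ≃+* R) (d f : R → R)
    (hd : IsMultSkewSemiDeriv d g α)
    (hf : IsMultGenSkewSemiDeriv f d g α) :
    ∀ a12 ∈ peirceSet e 0 1, ∀ b12 ∈ peirceSet e 0 1, ∀ c22 ∈ peirceSet e 1 1,
      ∀ b22 ∈ peirceSet e 1 1, ∀ a21 ∈ peirceSet e 1 0, ∀ c21 ∈ peirceSet e 1 0,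
        f (a12 + b12 * c22) = f a12 + f (b12 * c22) ∧
        f (a21 + b22 * c21) = f a21 + f (b22 * c21) := by
  intro a ha b hb c hc b2 hb2 a2 ha2 c2 hc2
  have hd0 : d 0 = 0 := by
    have h := hd.2.1 0 0
    simpa [hg.1] using h
  have hf0 : f 0 = 0 := by
    have h := hf.2.1 0 0
    simpa [hg.1] using h
  constructor
  · -- f (a12 + b12 * c22) = f a12 + f (b12 * c22)
    have fac : (pel e 0 + b) * (a + c) = a + b * c := by
      rw [add_mul, mul_add, mul_add, pelL e he ha, pelL0 e he (by decide) hc,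
        peirce_mul_zero e he (by decide) hb ha, add_zero, zero_add]
    have hgsum : g (pel e 0 + b) = g (pel e 0) + g b :=
      hg.2.2.2.1 _ (pel_mem e he 0) _ hb
    have hdsum : d (pel e 0 + b) = d (pel e 0) + d b :=
      add_of_right e hg hd0 hd.1 _ _
        (fun x hx => peirce_mul_zero e he (by decide) hb hx)
        (fun x hx => peirce_mul_zero e he (by decide) (pel_mem e he 0) hx)
    have hfsum : f (a + c) = f a + f c :=
      add_of_left e hg hf0 hf.2.1 _ _
        (fun x hx => peirce_mul_zero e he (by decide) hx hc)
        (fun x hx => peirce_mul_zero e he (by decide) hx ha)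
    calc f (a + b * c) = f ((pel e 0 + b) * (a + c)) := by rw [fac]
      _ = d (pel e 0 + b) * α (a + c) + g (pel e 0 + b) * f (a + c) := hf.2.1 _ _
      _ = (d (pel e 0) + d b) * (α a + α c) + (g (pel e 0) + g b) * (f a + f c) := by
          rw [hdsum, hgsum, hfsum, map_add]
      _ = (d (pel e 0) * α a + g (pel e 0) * f a) + (d (pel e 0) * α c + g (pel e 0) * f c)
          + (d b * α a + g b * f a) + (d b * α c + g b * f c) := by noncomm_ring
      _ = f (pel e 0 * a) + f (pel e 0 * c) + f (b * a) + f (b * c) := by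
          rw [← hf.2.1 (pel e 0) a, ← hf.2.1 (pel e 0) c, ← hf.2.1 b a, ← hf.2.1 b c]
      _ = f a + f (b * c) := by
          rw [pelL e he ha, pelL0 e he (by decide) hc,
            peirce_mul_zero e he (by decide) hb ha, hf0, add_zero, add_zero]
  · -- f (a21 + b22 * c21) = f a21 + f (b22 * c21)
    have fac : (a2 + b2) * (pel e 0 + c2) = a2 + b2 * c2 := by
      rw [add_mul, mul_add, mul_add, pelR e he ha2, peirce_mul_zero e he (by decide) ha2 hc2,
        pelR0 e he (by decide) hb2, add_zero, zero_add]
    have hfsum : f (a2 + b2) = f a2 + f b2 :=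
      add_of_right e hg hf0 hf.1 _ _
        (fun x hx => peirce_mul_zero e he (by decide) hb2 hx)
        (fun x hx => peirce_mul_zero e he (by decide) ha2 hx)
    have hgsum : g (pel e 0 + c2) = g (pel e 0) + g c2 :=
      hg.2.2.2.2 _ (pel_mem e he 0) _ hc2
    have hdsum : d (pel e 0 + c2) = d (pel e 0) + d c2 :=
      add_of_left e hg hd0 hd.2.1 _ _
        (fun x hx => peirce_mul_zero e he (by decide) hx hc2)
        (fun x hx => peirce_mul_zero e he (by decide) hx (pel_mem e he 0))
    calc f (a2 + b2 * c2) = f ((a2 + b2) * (pel e 0 + c2)) := by rw [fac]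
      _ = f (a2 + b2) * g (pel e 0 + c2) + α (a2 + b2) * d (pel e 0 + c2) := hf.1 _ _
      _ = (f a2 + f b2) * (g (pel e 0) + g c2) + (α a2 + α b2) * (d (pel e 0) + d c2) := by
          rw [hfsum, hgsum, hdsum, map_add]
      _ = (f a2 * g (pel e 0) + α a2 * d (pel e 0)) + (f a2 * g c2 + α a2 * d c2)
          + (f b2 * g (pel e 0) + α b2 * d (pel e 0)) + (f b2 * g c2 + α b2 * d c2) := by
          noncomm_ring
      _ = f (a2 * pel e 0) + f (a2 * c2) + f (b2 * pel e 0) + f (b2 * c2) := by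
          rw [← hf.1 a2 (pel e 0), ← hf.1 a2 c2, ← hf.1 b2 (pel e 0), ← hf.1 b2 c2]
      _ = f a2 + f (b2 * c2) := by
          rw [pelR e he ha2, peirce_mul_zero e he (by decide) ha2 hc2,
            pelR0 e he (by decide) hb2, hf0, add_zero, add_zero]
end
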